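/- In the (E,D̄)-setup: let τ < κ be a regular cardinal and let A_i ∈ D^+(κ) for i < τ be (E,D̄)-closed sets such that A_j ⊂*_{D(κ)} A_i whenever i < j < τ. Then ⋂_{i<τ} A_i ∈ D^+(κ) and ⋂_{i<τ} A_i is (E,D̄)-closed. -/

import Mathlib

noncomputable section

open Cardinal Set

universe u

/-- The generator `[α, κ) \ ⋃_{i<α} A_i` of the filter `D(κ)`. -/
def genD (κ : Cardinal.{u}) (A : κ.ord.ToType → Set κ.ord.ToType)
    (α : κ.ord.ToType) : Set κ.ord.ToType :=
  {ξ | α ≤ ξ} \ ⋃ i ∈ Iio α, A i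

/-- The filter `D(κ)` on `κ` generated by the sets `[α, κ) \ ⋃_{i<α} A_i`
(these generators are decreasing, so the filter is their upward closure). -/
def DK (κ : Cardinal.{u}) (A : κ.ord.ToType → Set κ.ord.ToType) :
    Set (Set κ.ord.ToType) :=
  {X | ∃ α, genD κ A α ⊆ X}

/-- `D^+(κ)`: the sets whose complement is not in `D(κ)`. -/
def DKplus (κ : Cardinal.{u}) (A : κ.ord.ToType → Set κ.ord.ToType) :
    Set (Set κ.ord.ToType) :=
  {X | Xᶜ ∉ DK κ A}

/-- `X =_{D(κ)} 0`, i.e. `κ \ X ∈ D(κ)`. -/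
def DKzero (κ : Cardinal.{u}) (A : κ.ord.ToType → Set κ.ord.ToType)
    (X : Set κ.ord.ToType) : Prop :=
  Xᶜ ∈ DK κ A

/-- `X ⊂*_{D(κ)} Y` : `X \ Y =_{D(κ)} 0` and `Y \ X ∈ D^+(κ)`. -/
def DKssub (κ : Cardinal.{u}) (A : κ.ord.ToType → Set κ.ord.ToType)
    (X Y : Set κ.ord.ToType) : Prop :=
  DKzero κ A (X \ Y) ∧ (Y \ X) ∈ DKplus κ A

/-- The filter `D^δ` on `δ` generated by the sets `[α, δ) \ ⋃_{i<α} A_i` for `α < δ`;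
its members are regarded as subsets of `Iio δ`. -/
def Ddelta (κ : Cardinal.{u}) (A : κ.ord.ToType → Set κ.ord.ToType)
    (δ : κ.ord.ToType) : Set (Set κ.ord.ToType) :=
  {X | X ⊆ Iio δ ∧ ∃ α, α < δ ∧ genD κ A α ∩ Iio δ ⊆ X}

/-- `D` is a proper filter on the ambient set `S`. -/
def IsProperFilterOn (κ : Cardinal.{u}) (S : Set κ.ord.ToType)
    (D : Set (Set κ.ord.ToType)) : Prop :=
  S ∈ D ∧ ∅ ∉ D ∧ (∀ X ∈ D, X ⊆ S) ∧
  (∀ X ∈ D, ∀ Y, X ⊆ Y → Y ⊆ S → Y ∈ D) ∧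
  (∀ X ∈ D, ∀ Y ∈ D, X ∩ Y ∈ D)

/-- The filter on the ambient set `S` generated by a filter `base` together with a
further family `G` of sets. -/
def GenOver (κ : Cardinal.{u}) (S : Set κ.ord.ToType)
    (base G : Set (Set κ.ord.ToType)) : Set (Set κ.ord.ToType) :=
  {X | X ⊆ S ∧ ∃ Y ∈ base, ∃ s ⊆ G, s.Finite ∧ Y ∩ ⋂₀ s ⊆ X}

/-- `C` is closed unbounded in `κ`. -/
def IsClubIn (κ : Cardinal.{u}) (C : Set κ.ord.ToType) : Prop :=
  (∀ α, ∃ ξ ∈ C, α < ξ) ∧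
  (∀ ξ, (∃ η, η < ξ) → (∀ η, η < ξ → ∃ c ∈ C, η < c ∧ c < ξ) → ξ ∈ C)

/-- `δ` is a limit element of `κ`: nonminimal, with no largest element below it. -/
def IsLimitElt (κ : Cardinal.{u}) (δ : κ.ord.ToType) : Prop :=
  (∃ η, η < δ) ∧ ∀ η, η < δ → ∃ η', η < η' ∧ η' < δ

/-- The `(E, D̄)`-setup: `κ` is regular uncountable with `κ^{<κ} = κ`;
`A i` (`i < κ`) are pairwise disjoint subsets of `κ ∖ (i+1)` of size `κ` covering
`κ ∖ {0}`; `E` is a set of limit ordinals `δ < κ`, containing a club, such that each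
`A α ∩ δ` (`α < δ`) is unbounded in `δ`; `delta ζ` is the unique `δ ∈ E` with
`ζ ∈ A δ`; and `D ζ` (for `ζ ∈ A* = ⋃_{δ∈E} A δ`) is a proper filter on `δ_ζ`
extending `D^{δ_ζ}`, generated over it by fewer than `κ` sets, such that every such
filter occurs as `D ζ` for `κ` many `ζ ∈ A δ`. -/
structure EDSetup (κ : Cardinal.{u}) where
  A : κ.ord.ToType → Set κ.ord.ToType
  E : Set κ.ord.ToType
  D : κ.ord.ToType → Set (Set κ.ord.ToType)
  delta : κ.ord.ToType → κ.ord.ToType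
  hreg : κ.IsRegular
  hunc : ℵ₀ < κ
  hpow : κ ^< κ = κ
  hdisj : ∀ i j, i ≠ j → Disjoint (A i) (A j)
  hgt : ∀ i, ∀ ξ ∈ A i, i < ξ
  hAcard : ∀ i, #(A i) = κ
  hcover : (⋃ i, A i) = {ξ | ∃ η, η < ξ}
  hElim : ∀ δ ∈ E, IsLimitElt κ δ
  hEunb : ∀ δ ∈ E, ∀ α, α < δ → ∀ β, β < δ → ∃ ξ ∈ A α, β < ξ ∧ ξ < δ
  hEclub : ∃ C ⊆ E, IsClubIn κ C
  hdelta : ∀ δ ∈ E, ∀ ζ ∈ A δ, delta ζ = δ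
  hDfilter : ∀ δ ∈ E, ∀ ζ ∈ A δ, IsProperFilterOn κ (Iio δ) (D ζ)
  hDgen : ∀ δ ∈ E, ∀ ζ ∈ A δ,
    ∃ G : Set (Set κ.ord.ToType), #G < κ ∧ D ζ = GenOver κ (Iio δ) (Ddelta κ A δ) G
  hDall : ∀ δ ∈ E, ∀ Df : Set (Set κ.ord.ToType),
    IsProperFilterOn κ (Iio δ) Df →
    (∃ G : Set (Set κ.ord.ToType), #G < κ ∧
        Df = GenOver κ (Iio δ) (Ddelta κ A δ) G) →
    #({ζ ∈ A δ | D ζ = Df} : Set κ.ord.ToType) = κ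

/-- `A* = ⋃_{δ ∈ E} A_δ`. -/
def Astar (κ : Cardinal.{u}) (S : EDSetup κ) : Set κ.ord.ToType :=
  ⋃ δ ∈ S.E, S.A δ

/-- `X` is `(E, D̄)`-closed: whenever `ζ ∈ A*` and `X ∩ δ_ζ ∈ D_ζ`, also `ζ ∈ X`. -/
def EDClosed (κ : Cardinal.{u}) (S : EDSetup κ) (X : Set κ.ord.ToType) : Prop :=
  ∀ ζ ∈ Astar κ S, X ∩ Iio (S.delta ζ) ∈ S.D ζ → ζ ∈ X

/-- `cl(X)`: the smallest `(E, D̄)`-closed subset of `κ` containing `X`. -/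
def EDcl (κ : Cardinal.{u}) (S : EDSetup κ) (X : Set κ.ord.ToType) :
    Set κ.ord.ToType :=
  ⋂₀ {Y | EDClosed κ S Y ∧ X ⊆ Y}

/-!
Intersections of `(E, D̄)`-closed sets are closed because every `D_ζ` is upward closed.

For positivity fix `α`. As `τ < κ` and `D(κ)` is `κ`-complete, there is one generator
`genD α₀` on which the `B j` decrease outright. Choose witnesses `pt j β ∈ genD β ∩ B j` and a
point `δ` of the club inside `E`, above `α` and `α₀`, closed under these witnesses. Then the
chain `genD α₀ ∩ B j ∩ δ` meets every set of `D^δ`, so with `D^δ` it generates a proper filter,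
by fewer than `κ` sets. Some `ζ ∈ A_δ` has this filter as `D_ζ`; it lies in every closed `B j`,
and in `genD α` because `α < δ`.
-/

section Filters

variable {κ : Cardinal.{u}}

theorem exists_forall_lt_of_mk_lt (hκ : κ.IsRegular) {s : Set κ.ord.ToType} (hs : #s < κ) :
    ∃ β, ∀ x ∈ s, x < β := by
  by_contra! hcof
  have := Order.cof_le (s := s) hcof
  rw [Ordinal.cof_toType, hκ.cof_ord] at this
  exact this.not_gt hs

theorem genD_anti (A : κ.ord.ToType → Set κ.ord.ToType) : Antitone (genD κ A) :=
  fun _ _ h _ hξ =>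
    ⟨h.trans hξ.1, fun hm => hξ.2 (biUnion_subset_biUnion_left (Iio_subset_Iio h) hm)⟩

theorem mem_DKplus_iff {A : κ.ord.ToType → Set κ.ord.ToType} {X : Set κ.ord.ToType} :
    X ∈ DKplus κ A ↔ ∀ α, (genD κ A α ∩ X).Nonempty := by
  simp only [DKplus, DK, mem_ofPred_eq, not_exists, ← disjoint_compl_right_iff_subset,
    not_disjoint_iff_nonempty_inter, compl_compl]

theorem iInter_mem_DK (hκ : κ.IsRegular) {A : κ.ord.ToType → Set κ.ord.ToType} {ι : Type u}
    (hι : #ι < κ) {X : ι → Set κ.ord.ToType} (hX : ∀ i, X i ∈ DK κ A) : ⋂ i, X i ∈ DK κ A := by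
  choose a ha using hX
  obtain ⟨α, hα⟩ := exists_forall_lt_of_mk_lt hκ (mk_range_le.trans_lt hι)
  exact ⟨α, subset_iInter fun i => (genD_anti A (hα _ (mem_range_self i)).le).trans (ha i)⟩

theorem exists_antitone_genD_inter (hκ : κ.IsRegular) {A : κ.ord.ToType → Set κ.ord.ToType}
    {ι : Type u} [LinearOrder ι] (hι : #ι < κ) {B : ι → Set κ.ord.ToType}
    (hdec : ∀ i j, i < j → DKzero κ A (B j \ B i)) :
    ∃ α, Antitone fun j => genD κ A α ∩ B j := by
  have hpairs : #{p : ι × ι // p.1 < p.2} < κ := by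
    refine mk_subtype_le _ |>.trans_lt ?_
    rw [mk_prod, lift_id]
    exact mul_lt_of_lt hκ.aleph0_le hι hι
  obtain ⟨α, hα⟩ := iInter_mem_DK hκ hpairs fun p => hdec p.1.1 p.1.2 p.2
  refine ⟨α, antitone_iff_forall_lt.2 fun i j hij ξ hξ => ⟨hξ.1, ?_⟩⟩
  by_contra hξi
  exact mem_iInter.1 (hα hξ.1) ⟨(i, j), hij⟩ ⟨hξ.2, hξi⟩

theorem mem_genOver_of_subset {A : κ.ord.ToType → Set κ.ord.ToType} {δ : κ.ord.ToType}
    {G : Set (Set κ.ord.ToType)} (hδ : ∃ η, η < δ) {X Y : Set κ.ord.ToType} (hX : X ∈ G)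
    (hXY : X ⊆ Y) (hY : Y ⊆ Iio δ) : Y ∈ GenOver κ (Iio δ) (Ddelta κ A δ) G := by
  obtain ⟨η, hη⟩ := hδ
  exact ⟨hY, Iio δ, ⟨subset_rfl, η, hη, inter_subset_right⟩, {X}, singleton_subset_iff.2 hX,
    finite_singleton X, by rw [sInter_singleton]; exact inter_subset_right.trans hXY⟩

theorem isProperFilterOn_genOver {A : κ.ord.ToType → Set κ.ord.ToType} {δ : κ.ord.ToType}
    {G : Set (Set κ.ord.ToType)} (hδ : ∃ η, η < δ)
    (hmeet : ∀ β < δ, ∀ s ⊆ G, s.Finite → (genD κ A β ∩ Iio δ ∩ ⋂₀ s).Nonempty) :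
    IsProperFilterOn κ (Iio δ) (GenOver κ (Iio δ) (Ddelta κ A δ) G) := by
  obtain ⟨η, hη⟩ := hδ
  refine ⟨⟨subset_rfl, Iio δ, ⟨subset_rfl, η, hη, inter_subset_right⟩, ∅, empty_subset G,
    finite_empty, inter_subset_left⟩, ?_, fun X hX => hX.1, ?_, ?_⟩
  · rintro ⟨-, Y, ⟨-, β, hβ, hβY⟩, s, hsG, hs, hsub⟩
    obtain ⟨ξ, ⟨hξ, hξs⟩⟩ := hmeet β hβ s hsG hs
    exact hsub ⟨hβY hξ, hξs⟩
  · rintro X ⟨-, Y, hY, s, hsG, hs, hsub⟩ Z hXZ hZ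
    exact ⟨hZ, Y, hY, s, hsG, hs, hsub.trans hXZ⟩
  · rintro X ⟨hX, Y₁, ⟨hY₁, β₁, hβ₁, hsub₁⟩, s₁, hs₁G, hs₁, hX₁⟩
      Z ⟨-, Y₂, ⟨-, β₂, hβ₂, hsub₂⟩, s₂, hs₂G, hs₂, hZ₂⟩
    refine ⟨inter_subset_left.trans hX, Y₁ ∩ Y₂, ⟨inter_subset_left.trans hY₁, max β₁ β₂,
      max_lt hβ₁ hβ₂, subset_inter ?_ ?_⟩, s₁ ∪ s₂, union_subset hs₁G hs₂G, hs₁.union hs₂, ?_⟩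
    · exact (inter_subset_inter_left _ (genD_anti A (le_max_left β₁ β₂))).trans hsub₁
    · exact (inter_subset_inter_left _ (genD_anti A (le_max_right β₁ β₂))).trans hsub₂
    · rw [sInter_union]
      exact fun ξ hξ => ⟨hX₁ ⟨hξ.1.1, hξ.2.1⟩, hZ₂ ⟨hξ.1.2, hξ.2.2⟩⟩

end Filters

theorem Antitone.inter_sInter_nonempty {α ι : Type*} [LinearOrder ι] {g : ι → Set α}
    (hg : Antitone g) {P : Set α} (hP : P.Nonempty) (hPg : ∀ j, (P ∩ g j).Nonempty)
    {s : Set (Set α)} (hs : s ⊆ range g) (hfin : s.Finite) : (P ∩ ⋂₀ s).Nonempty := by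
  rcases s.eq_empty_or_nonempty with rfl | hne
  · simpa using hP
  obtain ⟨m, hm⟩ := hfin.exists_minimal hne
  obtain ⟨j, rfl⟩ := hs hm.prop
  refine (hPg j).mono (inter_subset_inter_right _ (subset_sInter fun y hy => ?_))
  obtain ⟨i, rfl⟩ := hs hy
  rcases le_total i j with h | h
  · exact hg h
  · exact hm.le_of_le hy (hg h)

section Club

variable {κ : Cardinal.{u}} {C : Set κ.ord.ToType}

theorem IsClubIn.exists_limit_mem (hκ : κ.IsRegular) (hunc : ℵ₀ < κ) (hC : IsClubIn κ C)
    (seq : ℕ → κ.ord.ToType) (hseq : ∀ n, seq n < seq (n + 1)) (hseqC : ∀ n, seq n ∈ C) :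
    ∃ δ ∈ C, (∀ n, seq n < δ) ∧ ∀ η < δ, ∃ n, η < seq n := by
  obtain ⟨β, hβ⟩ := exists_forall_lt_of_mk_lt hκ
    ((countable_range seq).le_aleph0.trans_lt hunc)
  obtain ⟨δ, hδ, hδmin⟩ := wellFounded_lt.has_min {β | ∀ n, seq n < β}
    ⟨β, fun n => hβ _ (mem_range_self n)⟩
  have hcofinal : ∀ η < δ, ∃ n, η < seq n := by
    intro η hη
    by_contra! hle
    exact hδmin η (fun n => (hseq n).trans_le (hle (n + 1))) hη
  refine ⟨δ, hC.2 δ ⟨seq 0, hδ 0⟩ fun η hη => ?_, hδ, hcofinal⟩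
  obtain ⟨n, hn⟩ := hcofinal η hη
  exact ⟨seq (n + 1), hseqC _, hn.trans (hseq n), hδ _⟩

theorem IsClubIn.exists_mem_closed_under (hκ : κ.IsRegular) (hunc : ℵ₀ < κ)
    (hC : IsClubIn κ C) (F : κ.ord.ToType → κ.ord.ToType) (α : κ.ord.ToType) :
    ∃ δ ∈ C, α < δ ∧ ∀ β < δ, F β < δ := by
  have hnext : ∀ β, ∃ γ ∈ C, β < γ ∧ ∀ η < β, F η < γ := by
    intro β
    obtain ⟨γ₀, hγ₀⟩ := exists_forall_lt_of_mk_lt hκ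
      ((mk_image_le (f := F)).trans_lt (by simpa using mk_Iio_lt β))
    obtain ⟨γ, hγC, hγ⟩ := hC.1 (max β γ₀)
    exact ⟨γ, hγC, (le_max_left _ _).trans_lt hγ,
      fun η hη => (hγ₀ _ (mem_image_of_mem F hη)).trans ((le_max_right _ _).trans_lt hγ)⟩
  choose next hnextC hlt hnextF using hnext
  let seq : ℕ → κ.ord.ToType := fun n => next^[n + 1] α
  have hseq : ∀ n, seq (n + 1) = next (seq n) := fun n => Function.iterate_succ_apply' ..
  obtain ⟨δ, hδC, hδ, hcofinal⟩ := hC.exists_limit_mem hκ hunc seq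
    (fun n => hseq n ▸ hlt _) fun n => by simp only [seq, Function.iterate_succ_apply', hnextC]
  refine ⟨δ, hδC, (hlt α).trans (hδ 0), fun β hβ => ?_⟩
  obtain ⟨n, hn⟩ := hcofinal β hβ
  exact (hnextF _ β hn).trans (hseq n ▸ hδ (n + 1))

end Club

namespace EDSetup

variable {κ : Cardinal.{u}} (S : EDSetup κ)

theorem A_subset_genD (α : κ.ord.ToType) : S.A α ⊆ genD κ S.A α := fun ξ hξ =>
  ⟨(S.hgt α ξ hξ).le, fun hm => by
    obtain ⟨i, hi, hξi⟩ := mem_iUnion₂.1 hm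
    exact disjoint_left.1 (S.hdisj i α (ne_of_lt hi)) hξi hξ⟩

theorem genD_inter_Iio_nonempty {δ β : κ.ord.ToType} (hδ : δ ∈ S.E) (hβ : β < δ) :
    (genD κ S.A β ∩ Iio δ).Nonempty := by
  obtain ⟨ξ, hξ, -, hξδ⟩ := S.hEunb δ hδ β hβ β hβ
  exact ⟨ξ, S.A_subset_genD β hξ, hξδ⟩

theorem exists_mem_A_D_eq {δ : κ.ord.ToType} (hδ : δ ∈ S.E) {Df : Set (Set κ.ord.ToType)}
    (hDf : IsProperFilterOn κ (Iio δ) Df)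
    (hgen : ∃ G : Set (Set κ.ord.ToType), #G < κ ∧ Df = GenOver κ (Iio δ) (Ddelta κ S.A δ) G) :
    ∃ ζ ∈ S.A δ, S.D ζ = Df := by
  show ({ζ ∈ S.A δ | S.D ζ = Df} : Set κ.ord.ToType).Nonempty
  rw [← nonempty_coe_sort, ← mk_ne_zero_iff, S.hDall δ hδ Df hDf hgen]
  exact (aleph0_pos.trans_le S.hreg.aleph0_le).ne'

theorem iInter_mem_DKplus {ι : Type u} [LinearOrder ι] (hι : #ι < κ) {B : ι → Set κ.ord.ToType}
    (hpos : ∀ i, B i ∈ DKplus κ S.A) (hcl : ∀ i, EDClosed κ S (B i))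
    (hdec : ∀ i j, i < j → DKzero κ S.A (B j \ B i)) : (⋂ i, B i) ∈ DKplus κ S.A := by
  obtain ⟨α₀, hanti⟩ := exists_antitone_genD_inter S.hreg hι hdec
  choose pt hpt using fun j β => mem_DKplus_iff.1 (hpos j) β
  choose F hF using fun β => exists_forall_lt_of_mk_lt S.hreg
    (mk_range_le.trans_lt hι : #(range (pt · β)) < κ)
  obtain ⟨C, hCE, hC⟩ := S.hEclub
  refine mem_DKplus_iff.2 fun α => ?_
  obtain ⟨δ, hδC, hαδ, hδF⟩ := hC.exists_mem_closed_under S.hreg S.hunc F (max α α₀)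
  have hδE : δ ∈ S.E := hCE hδC
  have hδ : ∃ η, η < δ := ⟨α, (le_max_left α α₀).trans_lt hαδ⟩
  let g : ι → Set κ.ord.ToType := fun j => genD κ S.A α₀ ∩ B j ∩ Iio δ
  have hmeet : ∀ β < δ, ∀ s ⊆ range g, s.Finite → (genD κ S.A β ∩ Iio δ ∩ ⋂₀ s).Nonempty := by
    refine fun β hβ s hs hfin => Antitone.inter_sInter_nonempty
      (fun i j h => inter_subset_inter_left _ (hanti h)) (S.genD_inter_Iio_nonempty hδE hβ)
      (fun j => ?_) hs hfin
    have hβ' : max β α₀ < δ := max_lt hβ ((le_max_right α α₀).trans_lt hαδ)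
    have hptδ : pt j (max β α₀) < δ := (hF _ _ (mem_range_self j)).trans (hδF _ hβ')
    refine ⟨pt j (max β α₀), ⟨genD_anti S.A (le_max_left β α₀) (hpt j _).1, hptδ⟩,
      ⟨genD_anti S.A (le_max_right β α₀) (hpt j _).1, (hpt j _).2⟩, hptδ⟩
  obtain ⟨ζ, hζA, hζD⟩ := S.exists_mem_A_D_eq hδE (isProperFilterOn_genOver hδ hmeet)
    ⟨range g, mk_range_le.trans_lt hι, rfl⟩
  refine ⟨ζ, genD_anti S.A ((le_max_left α α₀).trans hαδ.le) (S.A_subset_genD δ hζA),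
    mem_iInter.2 fun j => hcl j ζ (mem_biUnion hδE hζA) ?_⟩
  rw [S.hdelta δ hδE ζ hζA, hζD]
  exact mem_genOver_of_subset hδ (mem_range_self j)
    (inter_subset_inter_left _ inter_subset_right) inter_subset_right

end EDSetup

theorem EDClosed.iInter {κ : Cardinal.{u}} {S : EDSetup κ} {ι : Sort*} {X : ι → Set κ.ord.ToType}
    (hX : ∀ i, EDClosed κ S (X i)) : EDClosed κ S (⋂ i, X i) := by
  intro ζ hζ hmem
  obtain ⟨δ, hδ, hζA⟩ := mem_iUnion₂.1 hζ
  obtain ⟨-, -, -, hupward, -⟩ := S.hDfilter δ hδ ζ hζA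
  rw [S.hdelta δ hδ ζ hζA] at hmem
  exact mem_iInter.2 fun i => hX i ζ hζ <| by
    rw [S.hdelta δ hδ ζ hζA]
    exact hupward _ hmem _ (inter_subset_inter_left _ (iInter_subset X i)) inter_subset_right

theorem iInter_closed_of_short_general (κ τ : Cardinal.{u}) (S : EDSetup κ)
    (hτκ : τ < κ)
    (B : τ.ord.ToType → Set κ.ord.ToType)
    (hpos : ∀ i, B i ∈ DKplus κ S.A)
    (hcl : ∀ i, EDClosed κ S (B i))
    (hdec : ∀ i j, i < j → DKssub κ S.A (B j) (B i)) :
    (⋂ i, B i) ∈ DKplus κ S.A ∧ EDClosed κ S (⋂ i, B i) :=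
  ⟨S.iInter_mem_DKplus (by rwa [mk_ord_toType]) hpos hcl fun i j h => (hdec i j h).1,
    EDClosed.iInter hcl⟩

/-- Lemma 5: if `τ < κ` is regular and `⟨A_i : i < τ⟩` is a `⊂*_{D(κ)}`-decreasing
sequence of `(E,D̄)`-closed sets in `D^+(κ)`, then `⋂_{i<τ} A_i` is an
`(E,D̄)`-closed set in `D^+(κ)`. -/
theorem iInter_closed_of_short (κ τ : Cardinal.{u}) (S : EDSetup κ)
    (hτ : τ.IsRegular) (hτκ : τ < κ)
    (B : τ.ord.ToType → Set κ.ord.ToType)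
    (hpos : ∀ i, B i ∈ DKplus κ S.A)
    (hcl : ∀ i, EDClosed κ S (B i))
    (hdec : ∀ i j, i < j → DKssub κ S.A (B j) (B i)) :
    (⋂ i, B i) ∈ DKplus κ S.A ∧ EDClosed κ S (⋂ i, B i) :=
  iInter_closed_of_short_general κ τ S hτκ B hpos hcl hdec
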